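/- Let R ∈ ℕ, γ > 0, σ > 0, w a unit vector in ℝ^d. Define φ(x) = |x - 3/4 - ⌊x - 1/4⌋| - 1/4 and nn as the neural network coinciding with φ on [-R, R] and vanishing outside. For x ∼ N(0, I_d) and independent ξ ∼ N(0, σ²), the total variation distance between the laws of (x, φ(γ⟨w,x⟩) + ξ) and (x, nn(γ⟨w,x⟩) + ξ) is at most (1/(4σ)) · P_{g∼N(0,1)}[|g| ≥ R/γ]. -/

import Mathlib

open MeasureTheory ProbabilityTheory NNReal

noncomputable def phi (x : ℝ) : ℝ := |x - 3/4 - ⌊x - 1/4⌋| - 1/4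

noncomputable def nn (R : ℕ) (x : ℝ) : ℝ :=
  max (x + R) 0 - max (x - R) 0 +
    2 * ∑ k ∈ Finset.Icc 1 (2 * R),
      (max (x + R + 1/4 - k) 0 - max (x + R + 3/4 - k) 0)

/-! Conditionally on `x`, the two labels are Gaussians of variance `σ²` centred at `φ t` and
`nn t`, where `t = γ⟪w, x⟫`. Since `nn` agrees with `φ` on `[-R, R]` and vanishes outside, the
centres coincide unless `|⟪w, x⟫| ≥ R / γ`, and then they differ by `|φ t| ≤ 1/4`. Two Gaussians
of variance `v` whose means differ by `δ` give any set masses differing by at most `δ / √(2πv)`: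
their densities cross at the midpoint of the means, so the discrepancy is largest on a half-line,
where it is the mass of an interval of length `δ` under a density bounded by `1 / √(2πv)`.
Integrating over `x`, with `⟪w, x⟫ ∼ N(0, 1)`, gives the bound. -/

open Real

noncomputable def rampSum (N : ℕ) (y : ℝ) : ℝ :=
  ∑ k ∈ Finset.Icc 1 N, (max (y + 1/4 - k) 0 - max (y + 3/4 - k) 0)

lemma nn_eq_rampSum (R : ℕ) (x : ℝ) :
    nn R x = max (x + R) 0 - max (x - R) 0 + 2 * rampSum (2 * R) (x + R) := rfl

-- Closed at both ends: where the floor jumps, `|x - 3/4 - n| = 1/2` for both candidates `n`.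
lemma phi_eq_abs_sub {x : ℝ} (n : ℤ) (h₁ : n ≤ x - 1/4) (h₂ : x - 1/4 ≤ n + 1) :
    phi x = |x - 3/4 - n| - 1/4 := by
  rcases h₂.lt_or_eq with h₂ | h₂
  · rw [phi, (Int.floor_eq_iff.mpr ⟨h₁, h₂⟩)]
  · have hfloor : ⌊x - 1/4⌋ = n + 1 := by rw [h₂]; exact_mod_cast Int.floor_intCast (n + 1)
    rw [phi, hfloor, abs_of_nonpos (by push_cast; linarith), abs_of_nonneg (by linarith)]
    push_cast
    linarith

lemma phi_add_natCast (x : ℝ) (n : ℕ) : phi (x + n) = phi x := by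
  rw [phi, phi, show x + n - 1/4 = x - 1/4 + n by ring, Int.floor_add_natCast]
  push_cast
  ring_nf

lemma abs_phi_le (x : ℝ) : |phi x| ≤ 1/4 := by
  have := phi_eq_abs_sub ⌊x - 1/4⌋ (Int.floor_le _) (Int.lt_floor_add_one _).le
  have h₁ := Int.floor_le (x - 1/4)
  have h₂ := Int.lt_floor_add_one (x - 1/4)
  rw [this, abs_le]
  constructor <;> cases abs_cases (x - 3/4 - ⌊x - 1/4⌋) <;> linarith

lemma rampSum_of_le {y : ℝ} (N : ℕ) (hy : y ≤ 1/4) : rampSum N y = 0 := by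
  refine Finset.sum_eq_zero fun k hk => ?_
  have hk : (1 : ℝ) ≤ k := by exact_mod_cast (Finset.mem_Icc.mp hk).1
  rw [max_eq_right (by linarith), max_eq_right (by linarith), sub_zero]

lemma rampSum_of_ge {y : ℝ} (N : ℕ) (hy : N - 1/4 ≤ y) : rampSum N y = -N / 2 := by
  have hterm : ∀ k ∈ Finset.Icc 1 N, max (y + 1/4 - k) 0 - max (y + 3/4 - k) 0 = -1/2 := by
    intro k hk
    have hk : (k : ℝ) ≤ N := by exact_mod_cast (Finset.mem_Icc.mp hk).2
    rw [max_eq_left (by linarith), max_eq_left (by linarith)]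
    ring
  rw [rampSum, Finset.sum_congr rfl hterm, Finset.sum_const, Nat.card_Icc, nsmul_eq_mul]
  push_cast
  ring

lemma add_two_mul_rampSum {y : ℝ} (N : ℕ) (h₀ : -1/4 ≤ y) (h₁ : y ≤ N + 1/4) :
    y + 2 * rampSum N y = phi y := by
  induction N with
  | zero =>
    rw [rampSum_of_le 0 (by simpa using h₁), phi_eq_abs_sub (-1) (by push_cast; linarith)
      (by push_cast; linarith), abs_of_nonneg (by push_cast; linarith)]
    push_cast
    ring
  | succ N ih =>
    rw [rampSum, Finset.sum_Icc_succ_top (by omega), ← rampSum]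
    push_cast at h₁ ⊢
    by_cases hy : y ≤ N + 1/4
    · rw [max_eq_right (by linarith), max_eq_right (by linarith), ← ih hy]
      ring
    · have hN := phi_eq_abs_sub (x := y) N (by push_cast; linarith) (by push_cast; linarith)
      rw [Int.cast_natCast] at hN
      rw [rampSum_of_ge N (by linarith), hN, max_eq_left (a := y + 3/4 - (N + 1)) (by linarith)]
      cases abs_cases (y - 3/4 - N) <;> cases max_cases (y + 1/4 - (N + 1)) 0 <;> linarith

lemma nn_eq_phi {R : ℕ} {x : ℝ} (hx : |x| ≤ R) : nn R x = phi x := by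
  obtain ⟨hx₁, hx₂⟩ := abs_le.mp hx
  rw [nn_eq_rampSum, max_eq_left (by linarith), max_eq_right (by linarith), sub_zero,
    add_two_mul_rampSum (2 * R) (by linarith) (by push_cast; linarith), phi_add_natCast]

lemma nn_eq_zero {R : ℕ} {x : ℝ} (hx : R ≤ |x|) : nn R x = 0 := by
  rcases le_abs'.mp hx with hx | hx
  · rw [nn_eq_rampSum, max_eq_right (by linarith), max_eq_right (by linarith),
      rampSum_of_le _ (by linarith)]
    ring
  · rw [nn_eq_rampSum, max_eq_left (by linarith), max_eq_left (by linarith),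
      rampSum_of_ge _ (by push_cast; linarith)]
    push_cast
    ring

lemma map_pi_gaussianReal_sum_mul {ι : Type*} [Fintype ι] (w : ι → ℝ) :
    (Measure.pi fun _ : ι => gaussianReal 0 1).map (fun x => ∑ i, w i * x i)
      = gaussianReal 0 (∑ i, w i ^ 2).toNNReal := by
  apply Measure.ext_of_charFun
  ext t
  have hcomp : (fun x : ι → ℝ => ∑ i, w i * x i)
      = (fun p : ι → ℝ => ∑ i, p i) ∘ (fun x i => w i * x i) := rfl
  rw [hcomp, ← Measure.map_map (by fun_prop) (by fun_prop), Measure.pi_map_pi (by fun_prop)]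
  simp only [gaussianReal_map_const_mul]
  rw [charFun_map_sum_pi_eq_prod]
  simp only [Finset.prod_apply, charFun_gaussianReal, ← Complex.exp_sum]
  congr 1
  rw [Real.coe_toNNReal _ (by positivity)]
  push_cast
  simp only [mul_zero, zero_mul, mul_one, zero_sub, Finset.sum_neg_distrib, Finset.sum_div,
    Finset.sum_mul]

lemma measure_add_le_add_of_restrict_le {α : Type*} [MeasurableSpace α] {μ ν : Measure α}
    {S : Set α} (hS : MeasurableSet S) (h₁ : ν.restrict S ≤ μ.restrict S)
    (h₂ : μ.restrict Sᶜ ≤ ν.restrict Sᶜ) {A : Set α} (hA : MeasurableSet A) :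
    μ A + ν S ≤ ν A + μ S := by
  have hAS : μ (A \ S) ≤ ν (A \ S) := by
    simpa only [Measure.restrict_apply' hS.compl, ← Set.sdiff_eq] using h₂ A
  have hSA : ν (S \ A) ≤ μ (S \ A) := by
    simpa only [Measure.restrict_apply' hS, Set.inter_comm, ← Set.sdiff_eq] using h₁ Aᶜ
  rw [← measure_inter_add_sdiff A hS, ← measure_inter_add_sdiff A hS (μ := ν),
    ← measure_inter_add_sdiff S hA (μ := μ), ← measure_inter_add_sdiff S hA (μ := ν),
    Set.inter_comm S A]
  calc μ (A ∩ S) + μ (A \ S) + (ν (A ∩ S) + ν (S \ A))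
      = μ (A ∩ S) + ν (A ∩ S) + μ (A \ S) + ν (S \ A) := by ring
    _ ≤ μ (A ∩ S) + ν (A ∩ S) + ν (A \ S) + μ (S \ A) := by gcongr
    _ = ν (A ∩ S) + ν (A \ S) + (μ (A ∩ S) + μ (S \ A)) := by ring

section Gaussian

variable {v : ℝ≥0}

lemma gaussianPDFReal_le (m x : ℝ) :
    gaussianPDFReal m v x ≤ (√(2 * π * v))⁻¹ := by
  rw [gaussianPDFReal]
  refine mul_le_of_le_one_right (by positivity) (exp_le_one_iff.mpr ?_)
  exact div_nonpos_of_nonpos_of_nonneg (by nlinarith) (by positivity)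

lemma gaussianPDFReal_le_of_sq_le {a b x : ℝ} (h : (x - a) ^ 2 ≤ (x - b) ^ 2) :
    gaussianPDFReal b v x ≤ gaussianPDFReal a v x := by
  simp only [gaussianPDFReal]
  gcongr ?_ * rexp (-?_ / _)

lemma gaussianReal_le_mul_volume (hv : v ≠ 0) (m : ℝ) (s : Set ℝ) :
    gaussianReal m v s ≤ ENNReal.ofReal (√(2 * π * v))⁻¹ * volume s := by
  rw [gaussianReal_apply m hv, ← setLIntegral_const]
  exact lintegral_mono fun x => ENNReal.ofReal_le_ofReal (gaussianPDFReal_le m x)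

lemma gaussianReal_restrict_le (hv : v ≠ 0) {a b : ℝ} {S : Set ℝ} (hS : MeasurableSet S)
    (h : ∀ x ∈ S, (x - a) ^ 2 ≤ (x - b) ^ 2) :
    (gaussianReal b v).restrict S ≤ (gaussianReal a v).restrict S := by
  rw [gaussianReal_of_var_ne_zero _ hv, gaussianReal_of_var_ne_zero _ hv,
    restrict_withDensity hS, restrict_withDensity hS]
  exact withDensity_mono ((ae_restrict_iff' hS).mpr (ae_of_all _ fun x hx =>
    ENNReal.ofReal_le_ofReal (gaussianPDFReal_le_of_sq_le (h x hx))))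

lemma gaussianReal_le_add_of_le (hv : v ≠ 0) {a b : ℝ} (hab : a ≤ b) {A : Set ℝ}
    (hA : MeasurableSet A) :
    gaussianReal a v A ≤ gaussianReal b v A + ENNReal.ofReal ((b - a) / √(2 * π * v)) := by
  set m := (a + b) / 2
  set c := m - (b - a)
  have hcompare := measure_add_le_add_of_restrict_le (μ := gaussianReal a v)
    (ν := gaussianReal b v) measurableSet_Iic
    (gaussianReal_restrict_le hv (a := a) (b := b) measurableSet_Iic
      fun x (hx : x ≤ (a + b) / 2) => by nlinarith)
    (gaussianReal_restrict_le hv (a := b) (b := a) measurableSet_Iic.compl fun x hx => by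
      have : (a + b) / 2 < x := not_le.mp hx
      nlinarith) hA
  have hshift : gaussianReal b v (Set.Iic m) = gaussianReal a v (Set.Iic c) := by
    rw [show b = a + (b - a) by ring, ← gaussianReal_map_add_const,
      Measure.map_apply (measurable_add_const _) measurableSet_Iic, Set.preimage_add_const_Iic]
  have hsplit : gaussianReal a v (Set.Iic m)
      = gaussianReal a v (Set.Iic c) + gaussianReal a v (Set.Ioc c m) := by
    rw [← measure_union (Set.Iic_disjoint_Ioc le_rfl) measurableSet_Ioc,
      Set.Iic_union_Ioc_eq_Iic (by linarith)]
  have hIoc : gaussianReal a v (Set.Ioc c m) ≤ ENNReal.ofReal ((b - a) / √(2 * π * v)) := by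
    refine (gaussianReal_le_mul_volume hv a _).trans_eq ?_
    rw [Real.volume_Ioc, ← ENNReal.ofReal_mul (by positivity)]
    congr 1
    ring
  rw [hshift, hsplit] at hcompare
  have hcancel : gaussianReal a v A + gaussianReal a v (Set.Iic c)
      ≤ gaussianReal b v A + gaussianReal a v (Set.Ioc c m) + gaussianReal a v (Set.Iic c) := by
    rwa [add_right_comm, add_assoc]
  calc gaussianReal a v A ≤ gaussianReal b v A + gaussianReal a v (Set.Ioc c m) :=
        (ENNReal.add_le_add_iff_right (measure_ne_top _ _)).mp hcancel
    _ ≤ _ := by gcongr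

lemma gaussianReal_le_add (hv : v ≠ 0) (a b : ℝ) {A : Set ℝ} (hA : MeasurableSet A) :
    gaussianReal a v A ≤ gaussianReal b v A + ENNReal.ofReal (|a - b| / √(2 * π * v)) := by
  rcases le_total a b with hab | hab
  · rw [abs_sub_comm, abs_of_nonneg (sub_nonneg.mpr hab)]
    exact gaussianReal_le_add_of_le hv hab hA
  · have hneg (m : ℝ) : gaussianReal (-m) v (-A) = gaussianReal m v A := by
      rw [← gaussianReal_map_neg, Measure.map_apply measurable_neg hA.neg, Set.neg_preimage,
        neg_neg]
    have := gaussianReal_le_add_of_le hv (neg_le_neg hab) hA.neg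
    rwa [hneg, hneg, neg_sub_neg, ← abs_of_nonneg (sub_nonneg.mpr hab)] at this

end Gaussian

lemma map_prod_mk_apply {α β γ : Type*} [MeasurableSpace α] [MeasurableSpace β]
    [MeasurableSpace γ] (μ : Measure α) (ν : Measure β) [SFinite ν] {g : α → β → γ}
    (hg : Measurable (Function.uncurry g)) {s : Set (α × γ)} (hs : MeasurableSet s) :
    (μ.prod ν).map (fun p => (p.1, g p.1 p.2)) s = ∫⁻ x, ν.map (g x) (Prod.mk x ⁻¹' s) ∂μ := by
  have hG : Measurable fun p : α × β => (p.1, g p.1 p.2) := measurable_fst.prodMk hg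
  rw [Measure.map_apply hG hs, Measure.prod_apply (hG hs)]
  refine lintegral_congr fun x => ?_
  rw [Measure.map_apply hg.of_uncurry_left (measurable_prodMk_left hs)]
  rfl

lemma map_prod_gaussianReal_le_add {α : Type*} [MeasurableSpace α] (μ : Measure α) {v : ℝ≥0}
    (hv : v ≠ 0) {f g : α → ℝ} (hf : Measurable f) (hg : Measurable g) {E : Set α}
    (hE : MeasurableSet E) (hfg : ∀ x ∉ E, f x = g x) {δ : ℝ} (hδ : ∀ x ∈ E, |f x - g x| ≤ δ)
    {s : Set (α × ℝ)} (hs : MeasurableSet s) :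
    (μ.prod (gaussianReal 0 v)).map (fun p => (p.1, f p.1 + p.2)) s
      ≤ (μ.prod (gaussianReal 0 v)).map (fun p => (p.1, g p.1 + p.2)) s
        + ENNReal.ofReal (δ / √(2 * π * v)) * μ E := by
  rw [map_prod_mk_apply μ _ (g := fun x y => f x + y) (by fun_prop) hs,
    map_prod_mk_apply μ _ (g := fun x y => g x + y) (by fun_prop) hs]
  simp only [gaussianReal_map_const_add, zero_add]
  rw [← lintegral_indicator_const hE, ← lintegral_add_right _ (measurable_const.indicator hE)]
  refine lintegral_mono fun x => ?_
  by_cases hx : x ∈ E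
  · rw [Set.indicator_of_mem hx]
    refine (gaussianReal_le_add hv (f x) (g x) (measurable_prodMk_left hs)).trans ?_
    gcongr
    exact hδ x hx
  · rw [hfg x hx]
    exact le_self_add

lemma abs_toReal_sub_toReal_le {a b e : ENNReal} (ha : a ≠ ⊤) (hb : b ≠ ⊤) (he : e ≠ ⊤)
    (hab : a ≤ b + e) (hba : b ≤ a + e) : |a.toReal - b.toReal| ≤ e.toReal := by
  have h₁ := ENNReal.toReal_mono (ENNReal.add_ne_top.mpr ⟨hb, he⟩) hab
  have h₂ := ENNReal.toReal_mono (ENNReal.add_ne_top.mpr ⟨ha, he⟩) hba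
  rw [ENNReal.toReal_add hb he] at h₁
  rw [ENNReal.toReal_add ha he] at h₂
  exact abs_sub_le_iff.mpr ⟨by linarith, by linarith⟩

lemma abs_map_prod_gaussianReal_sub_le {α : Type*} [MeasurableSpace α] (μ : Measure α)
    [IsFiniteMeasure μ] {v : ℝ≥0} (hv : v ≠ 0) {f g : α → ℝ} (hf : Measurable f)
    (hg : Measurable g) {E : Set α} (hE : MeasurableSet E) (hfg : ∀ x ∉ E, f x = g x) {δ : ℝ}
    (hδ₀ : 0 ≤ δ) (hδ : ∀ x ∈ E, |f x - g x| ≤ δ) {s : Set (α × ℝ)} (hs : MeasurableSet s) :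
    |((μ.prod (gaussianReal 0 v)).map (fun p => (p.1, f p.1 + p.2)) s).toReal
      - ((μ.prod (gaussianReal 0 v)).map (fun p => (p.1, g p.1 + p.2)) s).toReal|
      ≤ δ / √(2 * π * v) * μ.real E := by
  refine (abs_toReal_sub_toReal_le (measure_ne_top _ _) (measure_ne_top _ _)
    (ENNReal.mul_ne_top ENNReal.ofReal_ne_top (measure_ne_top _ _))
    (map_prod_gaussianReal_le_add μ hv hf hg hE hfg hδ hs)
    (map_prod_gaussianReal_le_add μ hv hg hf hE (fun x hx => (hfg x hx).symm)
      (fun x hx => abs_sub_comm (f x) (g x) ▸ hδ x hx) hs)).trans_eq ?_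
  rw [ENNReal.toReal_mul, ENNReal.toReal_ofReal (by positivity), measureReal_def]

lemma measurable_phi : Measurable phi := by
  unfold phi
  fun_prop

lemma continuous_nn (R : ℕ) : Continuous (nn R) := by
  unfold nn
  fun_prop

theorem tv_phi_nn_general (d : ℕ) (R : ℕ) (γ : ℝ) (hγ : 0 < γ) (σ : ℝ) (hσ : 0 < σ)
    (w : Fin d → ℝ) (hw : ∑ i, w i ^ 2 = 1) :
    ∀ s : Set ((Fin d → ℝ) × ℝ), MeasurableSet s →
      |((Measure.map
            (fun p : (Fin d → ℝ) × ℝ => (p.1, phi (γ * ∑ i, w i * p.1 i) + p.2))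
            ((Measure.pi fun _ : Fin d => gaussianReal 0 1).prod
              (gaussianReal 0 (Real.toNNReal (σ ^ 2))))) s).toReal -
        ((Measure.map
            (fun p : (Fin d → ℝ) × ℝ => (p.1, nn R (γ * ∑ i, w i * p.1 i) + p.2))
            ((Measure.pi fun _ : Fin d => gaussianReal 0 1).prod
              (gaussianReal 0 (Real.toNNReal (σ ^ 2))))) s).toReal|
        ≤ 1 / (4 * σ) * (gaussianReal 0 1 {y : ℝ | R / γ ≤ |y|}).toReal := by
  intro s hs
  set T : Set ℝ := {y | R / γ ≤ |y|}
  set ℓ : (Fin d → ℝ) → ℝ := fun x => ∑ i, w i * x i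
  have hℓ : Measurable ℓ := by fun_prop
  have hT : MeasurableSet T := measurableSet_le measurable_const continuous_abs.measurable
  have hagree : ∀ x ∉ ℓ ⁻¹' T, phi (γ * ℓ x) = nn R (γ * ℓ x) := fun x hx => by
    have : |ℓ x| * γ < R := (lt_div_iff₀ hγ).mp (not_le.mp hx)
    refine (nn_eq_phi ?_).symm
    rw [abs_mul, abs_of_pos hγ]
    linarith
  have hclose : ∀ x ∈ ℓ ⁻¹' T, |phi (γ * ℓ x) - nn R (γ * ℓ x)| ≤ 1/4 := fun x hx => by
    have : R ≤ |ℓ x| * γ := (div_le_iff₀ hγ).mp hx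
    rw [nn_eq_zero (by rw [abs_mul, abs_of_pos hγ]; linarith), sub_zero]
    exact abs_phi_le _
  have hv : (σ ^ 2).toNNReal ≠ 0 := by simp [hσ.ne']
  refine (abs_map_prod_gaussianReal_sub_le _ hv (measurable_phi.comp (hℓ.const_mul γ))
    ((continuous_nn R).measurable.comp (hℓ.const_mul γ)) (hℓ hT) hagree (by norm_num) hclose
    hs).trans ?_
  rw [measureReal_def, ← Measure.map_apply hℓ hT, map_pi_gaussianReal_sum_mul, hw,
    Real.toNNReal_one]
  gcongr ?_ * _
  have : σ ≤ √(2 * π * (σ ^ 2).toNNReal) := by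
    rw [Real.coe_toNNReal _ (sq_nonneg σ), Real.le_sqrt hσ.le (by positivity)]
    nlinarith [pi_gt_three]
  rw [div_div]
  gcongr

theorem tv_phi_nn (d : ℕ) (R : ℕ) (hR : 0 < R) (γ : ℝ) (hγ : 0 < γ) (σ : ℝ) (hσ : 0 < σ)
    (w : Fin d → ℝ) (hw : ∑ i, w i ^ 2 = 1) :
    ∀ s : Set ((Fin d → ℝ) × ℝ), MeasurableSet s →
      |((Measure.map
            (fun p : (Fin d → ℝ) × ℝ => (p.1, phi (γ * ∑ i, w i * p.1 i) + p.2))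
            ((Measure.pi fun _ : Fin d => gaussianReal 0 1).prod
              (gaussianReal 0 (Real.toNNReal (σ ^ 2))))) s).toReal -
        ((Measure.map
            (fun p : (Fin d → ℝ) × ℝ => (p.1, nn R (γ * ∑ i, w i * p.1 i) + p.2))
            ((Measure.pi fun _ : Fin d => gaussianReal 0 1).prod
              (gaussianReal 0 (Real.toNNReal (σ ^ 2))))) s).toReal|
        ≤ 1 / (4 * σ) * (gaussianReal 0 1 {y : ℝ | R / γ ≤ |y|}).toReal :=
  tv_phi_nn_general d R γ hγ σ hσ w hw
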